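/- arXiv:math/0304138 — 3 statements merged into one kernel-verified Lean document; each statement's English description precedes it below -/
import Mathlib

section
/- Every loop (shift-equivalence class of reduced closed paths) in a graph is a power c = c_0^m of a unique prime loop c_0, where a loop is prime if it is not a power d^k of a shorter loop d with k > 1. -/
/-- A graph: a vertex set with a symmetric, loopless adjacency relation. -/
structure CGraph where
  V : Type
  Adj : V → V → Prop
  symm : ∀ x y, Adj x y → Adj y x
  loopless : ∀ x, ¬ Adj x x

/-- A reduced closed path of length `len`, viewed cyclically: consecutive vertices are
adjacent, and there is no backtracking anywhere around the cycle (this cyclic condition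
includes tail-lessness). -/
structure RedLoop (G : CGraph) where
  len : ℕ
  pos : 0 < len
  v : ZMod len → G.V
  adj : ∀ i, G.Adj (v i) (v (i + 1))
  reduced : ∀ i, v (i - 1) ≠ v (i + 1)

/-- `p.pow k` is the `(k+1)`-st power of the loop `p`: the underlying path traversed
`k+1` times. -/
def RedLoop.pow {G : CGraph} (p : RedLoop G) (k : ℕ) : RedLoop G where
  len := p.len * (k + 1)
  pos := Nat.mul_pos p.pos (Nat.succ_pos k)
  v := fun i => p.v (ZMod.castHom (dvd_mul_right p.len (k + 1)) (ZMod p.len) i)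
  adj := fun i => by
    simp only [map_add, map_one]
    exact p.adj _
  reduced := fun i => by
    simp only [map_add, map_sub, map_one]
    exact p.reduced _

/-- Two reduced closed paths are shift-equivalent if they have the same length and one is
a cyclic shift of the other. -/
def ShiftEquiv {G : CGraph} (p q : RedLoop G) : Prop :=
  ∃ (h : p.len = q.len) (s : ZMod p.len), ∀ i : ZMod q.len,
    q.v i = p.v (ZMod.castHom h.dvd (ZMod p.len) i + s)

/-- A loop is prime if it is not a proper power `d^k`, `k > 1`, of a shorter loop `d`. -/
def IsPrimeLoop {G : CGraph} (p : RedLoop G) : Prop :=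
  ∀ (d : RedLoop G) (k : ℕ), ShiftEquiv p (d.pow k) → k = 0

namespace PrimeRootAux

variable {G : CGraph}

/-- The subgroup of periods of `p`. -/
def H (p : RedLoop G) : AddSubgroup (ZMod p.len) where
  carrier := {x | ∀ i, p.v (i + x) = p.v i}
  zero_mem' := by intro i; simp
  add_mem' := by
    intro a b ha hb i
    rw [← add_assoc, hb, ha]
  neg_mem' := by
    intro a ha i
    have := ha (i + -a)
    simpa using this.symm

instance (q : RedLoop G) : NeZero q.len := ⟨q.pos.ne'⟩

lemma mem_H {p : RedLoop G} {x : ZMod p.len} : x ∈ H p ↔ ∀ i, p.v (i + x) = p.v i := Iff.rfl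

def D (p : RedLoop G) : Set ℕ := {t | 0 < t ∧ ((t : ZMod p.len) ∈ H p)}

lemma len_mem_D (p : RedLoop G) : p.len ∈ D p :=
  ⟨p.pos, by rw [ZMod.natCast_self]; exact (H p).zero_mem⟩

noncomputable def d0 (p : RedLoop G) : ℕ := sInf (D p)

lemma d0_mem (p : RedLoop G) : d0 p ∈ D p := Nat.sInf_mem ⟨_, len_mem_D p⟩
lemma d0_pos (p : RedLoop G) : 0 < d0 p := (d0_mem p).1
lemma d0_memH (p : RedLoop G) : ((d0 p : ℕ) : ZMod p.len) ∈ H p := (d0_mem p).2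

lemma d0_dvd (p : RedLoop G) {t : ℕ} (ht : t ∈ D p) : d0 p ∣ t := by
  set g := Nat.gcd (d0 p) t with hg
  have hgpos : 0 < g := Nat.gcd_pos_of_pos_left _ (d0_pos p)
  have hgmem : ((g : ℕ) : ZMod p.len) ∈ H p := by
    have hb := Nat.gcd_eq_gcd_ab (d0 p) t
    have : ((g : ℕ) : ZMod p.len) =
        Nat.gcdA (d0 p) t • ((d0 p : ℕ) : ZMod p.len) + Nat.gcdB (d0 p) t • ((t : ℕ) : ZMod p.len) := by
      simp only [zsmul_eq_mul]
      have := congrArg (fun z : ℤ => (z : ZMod p.len)) hb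
      push_cast at this ⊢
      rw [this]; ring
    rw [this]
    exact (H p).add_mem (zsmul_mem (d0_memH p) _) (zsmul_mem ht.2 _)
  have hle : d0 p ≤ g := Nat.sInf_le ⟨hgpos, hgmem⟩
  have hge : g ≤ d0 p := Nat.le_of_dvd (d0_pos p) (Nat.gcd_dvd_left _ _)
  have : g = d0 p := le_antisymm hge hle
  rw [← this]; exact Nat.gcd_dvd_right _ _

noncomputable def w (p : RedLoop G) : ℕ → G.V := fun a => p.v a

lemma w_add_d0 (p : RedLoop G) (a : ℕ) : w p (a + d0 p) = w p a := by
  have := (d0_memH p) ((a : ℕ) : ZMod p.len)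
  simpa [w, Nat.cast_add] using this

lemma w_add_mul (p : RedLoop G) (k a : ℕ) : w p (a + d0 p * k) = w p a := by
  induction k with
  | zero => simp
  | succ k ih =>
    have : a + d0 p * (k + 1) = (a + d0 p * k) + d0 p := by ring
    rw [this, w_add_d0, ih]

lemma w_mod (p : RedLoop G) (a : ℕ) : w p (a % d0 p) = w p a := by
  conv_rhs => rw [← Nat.mod_add_div a (d0 p)]
  rw [w_add_mul]

lemma w_add_len (p : RedLoop G) (a : ℕ) : w p (a + p.len) = w p a := by
  unfold w; push_cast [ZMod.natCast_self]; rw [add_zero]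

lemma w_add_len_mul (p : RedLoop G) (k a : ℕ) : w p (a + p.len * k) = w p a := by
  induction k with
  | zero => simp
  | succ k ih =>
    have : a + p.len * (k + 1) = (a + p.len * k) + p.len := by ring
    rw [this, w_add_len, ih]

lemma period_of_shifted (p : RedLoop G) (c s : ℕ)
    (hc : ∀ a, w p (a + s + c) = w p (a + s)) (x : ℕ) : w p (x + c) = w p x := by
  have hle : s ≤ p.len * (s + 1) := by
    have h1 : s ≤ p.len * s := Nat.le_mul_of_pos_left s p.pos
    have h2 : p.len * (s + 1) = p.len * s + p.len := by ring
    omega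
  have h1 := hc (x + (p.len * (s + 1) - s))
  have hx : x + (p.len * (s + 1) - s) + s = x + p.len * (s + 1) := by omega
  rw [hx] at h1
  have h2 : x + p.len * (s + 1) + c = (x + c) + p.len * (s + 1) := by ring
  rw [h2, w_add_len_mul, w_add_len_mul] at h1
  exact h1

lemma memH_of_shifted (p : RedLoop G) (c s : ℕ)
    (hc : ∀ a, w p (a + s + c) = w p (a + s)) : ((c : ℕ) : ZMod p.len) ∈ H p := by
  haveI : NeZero p.len := ⟨p.pos.ne'⟩
  intro i
  obtain ⟨a, rfl⟩ := ZMod.natCast_zmod_surjective i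
  have := period_of_shifted p c s hc a
  unfold w at this
  push_cast at this
  exact this

lemma w_val_add (p : RedLoop G) (j : ZMod (d0 p)) (c : ℕ) :
    w p ((j + ((c : ℕ) : ZMod (d0 p))).val) = w p (j.val + c) := by
  haveI : NeZero (d0 p) := ⟨(d0_pos p).ne'⟩
  rw [ZMod.val_add, ZMod.val_natCast, w_mod]
  conv_rhs => rw [show j.val + c = j.val + c % d0 p + d0 p * (c / d0 p) by
    rw [add_assoc, Nat.mod_add_div c (d0 p)]]
  rw [w_add_mul]

noncomputable def root (p : RedLoop G) : RedLoop G where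
  len := d0 p
  pos := d0_pos p
  v := fun j => w p j.val
  adj := by
    haveI : NeZero (d0 p) := ⟨(d0_pos p).ne'⟩
    intro j
    show G.Adj (w p j.val) (w p ((j + 1).val))
    have h1 : (j + 1 : ZMod (d0 p)) = j + ((1 : ℕ) : ZMod (d0 p)) := by norm_num
    rw [h1, w_val_add]
    have : w p (j.val + 1) = p.v ((j.val : ZMod p.len) + 1) := by unfold w; push_cast; ring_nf
    rw [this]
    exact p.adj _
  reduced := by
    haveI : NeZero (d0 p) := ⟨(d0_pos p).ne'⟩
    intro j
    show w p ((j - 1).val) ≠ w p ((j + 1).val)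
    have hd1 : d0 p - 1 + 1 = d0 p := by have := d0_pos p; omega
    have hm1 : ((d0 p - 1 : ℕ) : ZMod (d0 p)) = -1 := by
      have h0 : ((d0 p - 1 : ℕ) : ZMod (d0 p)) + 1 = 0 := by
        rw [show ((d0 p - 1 : ℕ) : ZMod (d0 p)) + 1 = ((d0 p - 1 + 1 : ℕ) : ZMod (d0 p)) by
          push_cast; ring]
        rw [hd1, ZMod.natCast_self]
      linear_combination h0
    have hj1 : j - 1 = j + ((d0 p - 1 : ℕ) : ZMod (d0 p)) := by rw [hm1]; ring
    have e1 : w p ((j - 1).val) = p.v ((j.val : ZMod p.len) - 1) := by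
      rw [hj1, w_val_add]
      unfold w
      have : ((j.val + (d0 p - 1) : ℕ) : ZMod p.len) =
          ((j.val : ZMod p.len) - 1) + ((d0 p : ℕ) : ZMod p.len) := by
        push_cast [Nat.cast_sub (d0_pos p)]
        ring
      rw [this]
      exact (d0_memH p) _
    have e2 : w p ((j + 1).val) = p.v ((j.val : ZMod p.len) + 1) := by
      have h1 : (j + 1 : ZMod (d0 p)) = j + ((1 : ℕ) : ZMod (d0 p)) := by norm_num
      rw [h1, w_val_add]
      unfold w; push_cast; ring_nf
    rw [e1, e2]
    exact p.reduced _

lemma root_len (p : RedLoop G) : (root p).len = d0 p := rfl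

lemma root_cast (p : RedLoop G) (a : ℕ) : (root p).v ((a : ℕ) : ZMod (d0 p)) = w p a := by
  show w p ((a : ZMod (d0 p)).val) = w p a
  rw [ZMod.val_natCast, w_mod]

lemma pow_v_natCast (d : RedLoop G) (k a : ℕ) :
    (d.pow k).v ((a : ℕ) : ZMod (d.len * (k + 1))) = d.v ((a : ℕ) : ZMod d.len) := by
  show d.v (ZMod.castHom (dvd_mul_right d.len (k+1)) (ZMod d.len) ((a : ℕ) : ZMod (d.len * (k+1)))) = _
  rw [map_natCast]

end PrimeRootAux


open PrimeRootAux

/-- Every loop (shift-equivalence class of reduced closed paths) is a power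
`c = c₀^m` of a prime loop `c₀`, and `c₀` is unique up to shift-equivalence
(i.e. unique as a loop). -/
theorem exists_unique_prime_root {G : CGraph} (p : RedLoop G) :
    ∃ (p₀ : RedLoop G) (m : ℕ), IsPrimeLoop p₀ ∧ ShiftEquiv p (p₀.pow m) ∧
      ∀ (q₀ : RedLoop G) (m' : ℕ), IsPrimeLoop q₀ → ShiftEquiv p (q₀.pow m') →
        ShiftEquiv p₀ q₀ ∧ m = m' := by
  haveI : NeZero p.len := ⟨p.pos.ne'⟩
  haveI : NeZero (d0 p) := ⟨(d0_pos p).ne'⟩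
  have hdvd : d0 p ∣ p.len := d0_dvd p (len_mem_D p)
  set m : ℕ := p.len / d0 p - 1 with hmdef
  have hq1 : 1 ≤ p.len / d0 p := Nat.one_le_div_iff (d0_pos p) |>.2 (Nat.le_of_dvd p.pos hdvd)
  have hm : d0 p * (m + 1) = p.len := by
    rw [hmdef, Nat.sub_add_cancel hq1, Nat.mul_div_cancel' hdvd]
  -- helper: (root p).v ((b : ZMod d0) + s) = w p (b + s.val)
  have rootv : ∀ (b : ℕ) (s : ZMod (d0 p)),
      (root p).v (((b : ℕ) : ZMod (d0 p)) + s) = w p (b + s.val) := by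
    intro b s
    have : ((b : ℕ) : ZMod (d0 p)) + s = ((b + s.val : ℕ) : ZMod (d0 p)) := by
      push_cast [ZMod.natCast_zmod_val]
      rfl
    rw [this, root_cast]
  refine ⟨root p, m, ?_, ?_, ?_⟩
  · -- primality
    intro d k hse
    obtain ⟨h, s, hs⟩ := hse
    -- h : (root p).len = d.len * (k + 1), i.e. d0 p = d.len * (k+1)
    haveI : NeZero (d.len * (k + 1)) := ⟨(Nat.mul_pos d.pos k.succ_pos).ne'⟩
    have key : ∀ a : ℕ, d.v ((a : ℕ) : ZMod d.len) = w p (a + s.val) := by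
      intro a
      have h1 := hs ((a : ℕ) : ZMod (d.len * (k + 1)))
      erw [pow_v_natCast, map_natCast, rootv] at h1
      exact h1
    have hper : ∀ a : ℕ, w p (a + s.val + d.len) = w p (a + s.val) := by
      intro a
      have h2 := key (a + d.len)
      have h3 : ((a + d.len : ℕ) : ZMod d.len) = ((a : ℕ) : ZMod d.len) := by
        push_cast [ZMod.natCast_self]; ring
      rw [h3, key a] at h2
      have : a + d.len + s.val = a + s.val + d.len := by ring
      rw [this] at h2
      exact h2.symm
    have hmem : ((d.len : ℕ) : ZMod p.len) ∈ H p := memH_of_shifted p d.len s.val hper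
    have hd : d0 p ∣ d.len := d0_dvd p ⟨d.pos, hmem⟩
    have hle : d.len ≤ d0 p := by
      have : d.len * 1 ≤ d.len * (k + 1) := Nat.mul_le_mul_left _ k.succ_pos
      calc d.len = d.len * 1 := by ring
        _ ≤ d.len * (k + 1) := this
        _ = d0 p := h.symm
    have hdl : d.len = d0 p := le_antisymm hle (Nat.le_of_dvd d.pos hd)
    have h2 : d0 p = d.len * (k + 1) := h
    rw [hdl] at h2
    have : d0 p * 1 = d0 p * (k + 1) := by rw [mul_one]; exact h2
    have := Nat.eq_of_mul_eq_mul_left (d0_pos p) this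
    omega
  · -- ShiftEquiv p ((root p).pow m)
    refine ⟨(hm.symm : p.len = ((root p).pow m).len), 0, ?_⟩
    intro i
    obtain ⟨a, rfl⟩ := ZMod.natCast_zmod_surjective i
    erw [pow_v_natCast, root_cast, map_natCast, add_zero]
    rfl
  · -- uniqueness
    intro q₀ m' hq hse
    obtain ⟨h', s', hs'⟩ := hse
    -- h' : p.len = q₀.len * (m' + 1)
    have key : ∀ a : ℕ, q₀.v ((a : ℕ) : ZMod q₀.len) = w p (a + s'.val) := by
      intro a
      have h1 := hs' ((a : ℕ) : ZMod (q₀.len * (m' + 1)))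
      erw [pow_v_natCast, map_natCast] at h1
      rw [h1]
      show p.v _ = p.v _
      congr 1
      push_cast [ZMod.natCast_zmod_val]
      rfl
    have hper : ∀ a : ℕ, w p (a + s'.val + q₀.len) = w p (a + s'.val) := by
      intro a
      have h2 := key (a + q₀.len)
      have h3 : ((a + q₀.len : ℕ) : ZMod q₀.len) = ((a : ℕ) : ZMod q₀.len) := by
        push_cast [ZMod.natCast_self]; ring
      rw [h3, key a] at h2
      have : a + q₀.len + s'.val = a + s'.val + q₀.len := by ring
      rw [this] at h2
      exact h2.symm
    have hmem : ((q₀.len : ℕ) : ZMod p.len) ∈ H p := memH_of_shifted p q₀.len s'.val hper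
    have hdq : d0 p ∣ q₀.len := d0_dvd p ⟨q₀.pos, hmem⟩
    set t : ℕ := q₀.len / d0 p with htdef
    have ht : d0 p * t = q₀.len := Nat.mul_div_cancel' hdq
    have ht1 : 1 ≤ t := Nat.one_le_div_iff (d0_pos p) |>.2 (Nat.le_of_dvd q₀.pos hdq)
    have hbs : d0 p * (s'.val + 1) - s'.val + s'.val = d0 p * (s'.val + 1) := by
      have h1 : s'.val ≤ d0 p * s'.val := Nat.le_mul_of_pos_left _ (d0_pos p)
      have h2 : d0 p * (s'.val + 1) = d0 p * s'.val + d0 p := by ring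
      omega
    -- ShiftEquiv q₀ ((root p).pow (t - 1))
    have hse2 : ShiftEquiv q₀ ((root p).pow (t - 1)) := by
      have hlen : q₀.len = (root p).len * (t - 1 + 1) := by
        rw [Nat.sub_add_cancel ht1]
        exact (ht).symm
      refine ⟨(hlen : q₀.len = ((root p).pow (t - 1)).len), ((d0 p * (s'.val + 1) - s'.val : ℕ) : ZMod q₀.len), ?_⟩
      intro i
      obtain ⟨a, rfl⟩ := ZMod.natCast_zmod_surjective i
      erw [pow_v_natCast, root_cast, map_natCast]
      have hc : ((a : ℕ) : ZMod q₀.len) + ((d0 p * (s'.val + 1) - s'.val : ℕ) : ZMod q₀.len)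
          = ((a + (d0 p * (s'.val + 1) - s'.val) : ℕ) : ZMod q₀.len) := by push_cast; ring
      rw [hc, key]
      rw [add_assoc, hbs, w_add_mul]
    have ht0 : t - 1 = 0 := hq _ _ hse2
    have htt : t = 1 := by omega
    have hql : q₀.len = d0 p := by rw [← ht, htt, mul_one]
    constructor
    · refine ⟨hql.symm, ((s'.val : ℕ) : ZMod (d0 p)), ?_⟩
      intro i
      obtain ⟨a, rfl⟩ := ZMod.natCast_zmod_surjective i
      rw [key, map_natCast]
      erw [rootv]
      rw [ZMod.val_natCast]
      conv_lhs => rw [show a + s'.val = a + s'.val % d0 p + d0 p * (s'.val / d0 p) from by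
        rw [add_assoc, Nat.mod_add_div]]
      rw [w_add_mul]
    · have h'' : p.len = q₀.len * (m' + 1) := h'
      have : d0 p * (m + 1) = d0 p * (m' + 1) := by
        rw [hm, h'', hql]
      have := Nat.eq_of_mul_eq_mul_left (d0_pos p) this
      omega
end

section
/- Let Γ be a group in which every nontrivial element γ has infinite cyclic centralizer. Then for every nontrivial γ ∈ Γ there is a unique primitive element γ_0 (an element that is not a proper power) and a unique μ ∈ ℕ, μ ≥ 1, with γ = γ_0^μ. -/
/-- An element `τ` of a group is primitive if `τ = σ^n` (with `n : ℕ`) implies `n = 1`. -/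
def IsPrimitiveElt {Γ : Type*} [Group Γ] (τ : Γ) : Prop :=
  ∀ (σ : Γ) (n : ℕ), τ = σ ^ n → n = 1

/-- In a group where every nontrivial element has infinite cyclic centralizer, every
nontrivial element `γ` is uniquely `γ = γ₀^μ` with `γ₀` primitive and `μ ≥ 1`. -/
theorem exists_unique_primitive_root {Γ : Type*} [Group Γ]
    (h : ∀ γ : Γ, γ ≠ 1 →
      IsCyclic (Subgroup.centralizer {γ}) ∧ Infinite (Subgroup.centralizer {γ})) :
    ∀ γ : Γ, γ ≠ 1 → ∃ (γ₀ : Γ) (μ : ℕ), 1 ≤ μ ∧ IsPrimitiveElt γ₀ ∧ γ = γ₀ ^ μ ∧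
      ∀ (γ₀' : Γ) (μ' : ℕ), 1 ≤ μ' → IsPrimitiveElt γ₀' → γ = γ₀' ^ μ' →
        γ₀' = γ₀ ∧ μ' = μ := by
  intro γ hγ
  obtain ⟨hc, hinf⟩ := h γ hγ
  obtain ⟨g, hg⟩ := hc.exists_generator
  have hall : ∀ x : Γ, x * γ = γ * x → ∃ n : ℤ, x = (g : Γ) ^ n := by
    intro x hx
    have hxc : x ∈ Subgroup.centralizer {γ} :=
      Subgroup.mem_centralizer_singleton_iff.mpr hx
    obtain ⟨n, hn⟩ := hg ⟨x, hxc⟩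
    exact ⟨n, by simpa using congrArg (Subtype.val) hn.symm⟩
  have hfin : ¬ IsOfFinOrder (g : Γ) := by
    intro hf
    have hf' : IsOfFinOrder g := by
      rwa [← orderOf_pos_iff, ← Subgroup.orderOf_coe, orderOf_pos_iff]
    have h1 : (Subgroup.zpowers g : Set (Subgroup.centralizer {γ})).Finite :=
      hf'.finite_zpowers
    have hset : (Subgroup.zpowers g : Set (Subgroup.centralizer ({γ} : Set Γ))) = Set.univ := by
      ext x; simpa using hg x
    rw [hset] at h1
    haveI : Finite (Subgroup.centralizer ({γ} : Set Γ)) := Set.finite_univ_iff.mp h1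
    exact not_finite (Subgroup.centralizer ({γ} : Set Γ))
  have hinj : Function.Injective fun n : ℤ => (g : Γ) ^ n :=
    injective_zpow_iff_not_isOfFinOrder.mpr hfin
  obtain ⟨t, hall, hinj⟩ :
      ∃ t : Γ, (∀ x : Γ, x * γ = γ * x → ∃ n : ℤ, x = t ^ n) ∧
        Function.Injective fun n : ℤ => t ^ n := ⟨(g : Γ), hall, hinj⟩
  clear hg hfin
  obtain ⟨k, hk⟩ := hall γ rfl
  have hk0 : k ≠ 0 := by
    intro h0; apply hγ; rw [hk, h0, zpow_zero]
  have key : ∀ (γ₀' : Γ) (μ' : ℕ), 1 ≤ μ' → IsPrimitiveElt γ₀' → γ = γ₀' ^ μ' →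
      (γ₀' = t ∧ k = (μ' : ℤ)) ∨ (γ₀' = t⁻¹ ∧ k = -(μ' : ℤ)) := by
    intro γ₀' μ' hμ' hprim hpow
    have hcomm : γ₀' * γ = γ * γ₀' := by
      rw [hpow]; exact Commute.self_pow γ₀' μ'
    obtain ⟨m, hm⟩ := hall γ₀' hcomm
    rcases le_or_gt 0 m with hm0 | hm0
    · have hnat : γ₀' = t ^ m.toNat := by
        rw [hm, ← zpow_natCast, Int.toNat_of_nonneg hm0]
      have h1 := hprim _ _ hnat
      have hm1 : m = 1 := by omega
      have hkey : t ^ k = t ^ ((μ' : ℤ)) := by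
        rw [← hk, hpow, hm, hm1, zpow_one, zpow_natCast]
      exact Or.inl ⟨by rw [hm, hm1, zpow_one], hinj hkey⟩
    · have hnat : γ₀' = (t⁻¹) ^ (-m).toNat := by
        rw [hm, inv_pow, ← zpow_natCast, Int.toNat_of_nonneg (by omega), zpow_neg, inv_inv]
      have h1 := hprim _ _ hnat
      have hm1 : m = -1 := by omega
      have hkey : t ^ k = t ^ (-(μ' : ℤ)) := by
        rw [← hk, hpow, hm, hm1, zpow_neg_one, inv_pow, ← zpow_natCast, ← zpow_neg]
      exact Or.inr ⟨by rw [hm, hm1, zpow_neg_one], hinj hkey⟩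
  have hprim_g : IsPrimitiveElt t := by
    intro σ n hσ
    have hcg : Commute σ t := hσ ▸ (Commute.self_pow σ n)
    have hcomm : σ * γ = γ * σ := by
      have := hcg.zpow_right k; rw [← hk] at this; exact this
    obtain ⟨m, hm⟩ := hall σ hcomm
    have hkey : t ^ (1 : ℤ) = t ^ (m * n) := by
      rw [zpow_one, zpow_mul, ← hm, zpow_natCast, ← hσ]
    have hn : (1 : ℤ) = m * n := hinj hkey
    have hd : (n : ℤ) ∣ 1 := ⟨m, by linarith [mul_comm m (n : ℤ)]⟩
    have := Int.eq_one_of_dvd_one (by positivity) hd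
    exact_mod_cast this
  have hprim_gi : IsPrimitiveElt (t⁻¹) := by
    intro σ n hσ
    have h1 : Commute σ (t⁻¹) := hσ ▸ (Commute.self_pow σ n)
    have hcg : Commute σ t := by
      have := h1.inv_right; rwa [inv_inv] at this
    have hcomm : σ * γ = γ * σ := by
      have := hcg.zpow_right k; rw [← hk] at this; exact this
    obtain ⟨m, hm⟩ := hall σ hcomm
    have hkey : t ^ (-1 : ℤ) = t ^ (m * n) := by
      rw [zpow_mul, ← hm, zpow_natCast, ← hσ, zpow_neg_one]
    have hn : (-1 : ℤ) = m * n := hinj hkey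
    have hd : (n : ℤ) ∣ 1 := ⟨-m, by linarith [mul_comm m (n : ℤ)]⟩
    have := Int.eq_one_of_dvd_one (by positivity) hd
    exact_mod_cast this
  rcases lt_or_gt_of_ne hk0 with hkneg | hkpos
  · refine ⟨t⁻¹, k.natAbs, by omega, hprim_gi, ?_, ?_⟩
    · rw [hk, inv_pow, ← zpow_natCast, ← zpow_neg]
      congr 1
      omega
    · intro γ₀' μ' hμ' hprim hpow
      rcases key γ₀' μ' hμ' hprim hpow with ⟨h1, h2⟩ | ⟨h1, h2⟩
      · omega
      · exact ⟨h1, by omega⟩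
  · refine ⟨t, k.natAbs, by omega, hprim_g, ?_, ?_⟩
    · rw [hk, ← zpow_natCast]
      congr 1
      omega
    · intro γ₀' μ' hμ' hprim hpow
      rcases key γ₀' μ' hμ' hprim hpow with ⟨h1, h2⟩ | ⟨h1, h2⟩
      · exact ⟨h1, by omega⟩
      · omega
end

section
/- Let X be a countable set of 'oriented edges' with an involution e ↦ e⁻¹ and maps start, target : X → V with start(e⁻¹) = target(e). Let T be the endomorphism of the free vector space ⨁_{e∈X} ℂ (X finite) defined by T(δ_e) = ∑_{e': start(e') = target(e), e' ≠ e⁻¹} δ_{e'}. Then for every n ≥ 1, tr(T^n) equals the number of reduced closed paths of length n in the graph, i.e., tr(T^n) = ∑_{loops c of length n} l(c_0), summing over loops c of length n with underlying prime loop c_0. -/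
private lemma pow_entry {X : Type*} [Fintype X] [DecidableEq X] (M : Matrix X X ℂ) :
    ∀ (k : ℕ) (a b : X), (M ^ (k + 1)) a b =
      ∑ f : Fin k → X,
        (∏ i : Fin k, M ((Fin.cons a f : Fin (k+1) → X) i.castSucc)
            ((Fin.cons a f : Fin (k+1) → X) i.succ)) *
          M ((Fin.cons a f : Fin (k+1) → X) (Fin.last k)) b := by
  intro k
  induction k with
  | zero =>
    intro a b
    simp [Finset.sum_const]
  | succ k ih =>
    intro a b
    rw [pow_succ', Matrix.mul_apply]
    simp_rw [ih, Finset.mul_sum]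
    conv_rhs => rw [← Equiv.sum_comp (Fin.consEquiv (fun _ => X))]
    rw [Fintype.sum_prod_type]
    refine Finset.sum_congr rfl fun x _ => Finset.sum_congr rfl fun f _ => ?_
    have hc : (Fin.consEquiv (fun _ => X)) (x, f) = Fin.cons x f := rfl
    rw [hc]
    have hlast : (Fin.cons a (Fin.cons x f) : Fin (k+2) → X) (Fin.last (k+1))
        = (Fin.cons x f : Fin (k+1) → X) (Fin.last k) := by
      rw [show Fin.last (k+1) = (Fin.last k).succ from rfl, Fin.cons_succ]
    rw [hlast, Fin.prod_univ_succ]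
    have h0 : M ((Fin.cons a (Fin.cons x f) : Fin (k+2) → X) ((0 : Fin (k+1)).castSucc))
        ((Fin.cons a (Fin.cons x f) : Fin (k+2) → X) ((0 : Fin (k+1)).succ)) = M a x := by
      norm_num
    rw [h0]
    have hprod : (∏ i : Fin k, M ((Fin.cons a (Fin.cons x f) : Fin (k+2) → X) i.succ.castSucc)
          ((Fin.cons a (Fin.cons x f) : Fin (k+2) → X) i.succ.succ))
        = ∏ i : Fin k, M ((Fin.cons x f : Fin (k+1) → X) i.castSucc)
            ((Fin.cons x f : Fin (k+1) → X) i.succ) := by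
      refine Finset.prod_congr rfl fun i _ => ?_
      have e1 : (Fin.cons a (Fin.cons x f) : Fin (k+2) → X) i.succ.castSucc
          = (Fin.cons x f : Fin (k+1) → X) i.castSucc := by
        rw [show (i.succ.castSucc : Fin (k+2)) = (i.castSucc).succ from rfl, Fin.cons_succ]
      have e2 : (Fin.cons a (Fin.cons x f) : Fin (k+2) → X) i.succ.succ
          = (Fin.cons x f : Fin (k+1) → X) i.succ := by
        rw [show (i.succ.succ : Fin (k+2)) = ((i.succ : Fin (k+1))).succ from rfl, Fin.cons_succ]
      rw [e1, e2]
    rw [hprod]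
    ring

private lemma trace_pow_cyc {X : Type*} [Fintype X] [DecidableEq X] (M : Matrix X X ℂ) (m : ℕ) :
    Matrix.trace (M ^ (m + 1)) =
      ∑ c : Fin (m + 1) → X, ∏ i : Fin (m + 1), M (c i) (c (i + 1)) := by
  rw [Matrix.trace]
  simp_rw [Matrix.diag, pow_entry]
  conv_rhs => rw [← Equiv.sum_comp (Fin.consEquiv (fun _ => X))]
  rw [Fintype.sum_prod_type]
  refine Finset.sum_congr rfl fun a _ => Finset.sum_congr rfl fun f _ => ?_
  have hc : (Fin.consEquiv (fun _ => X)) (a, f) = Fin.cons a f := rfl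
  rw [hc, Fin.prod_univ_castSucc]
  congr 1
  · refine Finset.prod_congr rfl fun i _ => ?_
    have h1 : (i.castSucc + 1 : Fin (m+1)) = i.succ := by
      ext
      simp [Fin.val_add_one, (Fin.castSucc_lt_last i).ne]
    rw [h1]
  · congr 1
    rw [Fin.last_add_one]
    simp

/-- Let `X` be a finite set of oriented edges with involution `e ↦ e⁻¹` and maps
`start`, `target` with `start(e⁻¹) = target(e)`.  Let `M` be the edge-adjacency matrix
(`M e e' = 1` iff `e'` follows `e` without backtracking).  Then for every `n ≥ 1`,
`tr(Mⁿ)` equals the number of reduced closed paths of length `n`. -/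
theorem trace_pow_eq_card_reduced_closed_paths {X V : Type*} [Fintype X] [DecidableEq X]
    [DecidableEq V] (inv : X → X) (hinv : Function.Involutive inv)
    (start target : X → V) (hst : ∀ e, start (inv e) = target e)
    (M : Matrix X X ℂ)
    (hM : ∀ e e', M e e' = if start e' = target e ∧ e' ≠ inv e then 1 else 0)
    (n : ℕ) (hn : 1 ≤ n) :
    Matrix.trace (M ^ n) =
      (Nat.card {c : ZMod n → X //
        ∀ i, start (c (i + 1)) = target (c i) ∧ c (i + 1) ≠ inv (c i)} : ℂ) := by
  obtain ⟨m, rfl⟩ := Nat.exists_eq_add_of_le hn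
  rw [Nat.add_comm 1 m]
  rw [trace_pow_cyc]
  have key : ∀ c : Fin (m + 1) → X,
      (∏ i : Fin (m + 1), M (c i) (c (i + 1))) =
        if (∀ i : Fin (m+1), start (c (i + 1)) = target (c i) ∧ c (i + 1) ≠ inv (c i))
        then 1 else 0 := by
    intro c
    simp_rw [hM]
    rw [Finset.prod_boole]
    simp
  simp_rw [key]
  rw [Finset.sum_boole]
  have : {c : ZMod (m+1) → X //
        ∀ i, start (c (i + 1)) = target (c i) ∧ c (i + 1) ≠ inv (c i)}
      = {c : Fin (m+1) → X //
        ∀ i, start (c (i + 1)) = target (c i) ∧ c (i + 1) ≠ inv (c i)} := rfl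
  rw [this, Nat.card_eq_fintype_card, Fintype.card_subtype, Finset.card_filter]
end
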